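/- Let § be a proposition and X a type. The following are equivalent: (1) the projection § × X → § is a bijection; (2) the type § → X is a singleton; (3) § implies X is a singleton; (4) the canonical map X → § ⋆ X into the join (pushout of § ← § × X → X) is a bijection. -/
import Mathlib


/-- The relation on `PLift S ⊕ X` identifying every point of `S` with every
point of `X`; its quotient is the join `S ⋆ X`. -/
def JoinRel (S : Prop) (X : Type u) : PLift S ⊕ X → PLift S ⊕ X → Prop :=
  fun a b => ∃ (s : S) (x : X), a = Sum.inl ⟨s⟩ ∧ b = Sum.inr x

/-- The join `S ⋆ X` of a proposition `S` and a type `X`: the pushout of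
`S ← S × X → X`, realized as a quotient of `PLift S ⊕ X`. -/
def Join (S : Prop) (X : Type u) : Type u := Quot (JoinRel S X)

/-- Left inclusion `S → S ⋆ X`. -/
def Join.inl {S : Prop} {X : Type u} (s : S) : Join S X := Quot.mk _ (Sum.inl ⟨s⟩)

/-- Right inclusion `X → S ⋆ X`. -/
def Join.inr {S : Prop} {X : Type u} (x : X) : Join S X := Quot.mk _ (Sum.inr x)

/-- Functoriality of the join in its type argument. -/
def Join.map {S : Prop} {X Y : Type u} (f : X → Y) : Join S X → Join S Y :=
  Quot.lift (fun a => Quot.mk _ (Sum.map id f a)) (by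
    rintro a b ⟨s, x, rfl, rfl⟩
    exact Quot.sound ⟨s, f x, rfl, rfl⟩)

/-- For a proposition `S` and a type `X`, the following are equivalent:
(1) the projection `S × X → S` is a bijection ("`X` is `S`-closed-modal");
(2) the function type `S → X` is a singleton;
(3) `S` implies `X` is a singleton;
(4) the canonical map `X → S ⋆ X` into the join is a bijection. -/
theorem closed_modal_tfae (S : Prop) (X : Type u) :
    List.TFAE
      [ Function.Bijective (fun p : PLift S × X => p.1),
        Nonempty ((S → X) ≃ PUnit),
        S → Nonempty (X ≃ PUnit),
        Function.Bijective (fun x : X => (Join.inr x : Join S X)) ] := by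
  tfae_have 1 → 3 := by
    rintro ⟨hinj, hsurj⟩ s
    obtain ⟨p, hp⟩ := hsurj ⟨s⟩
    haveI : Nonempty X := ⟨p.2⟩
    haveI : Subsingleton X := ⟨fun x y => by
      have := hinj (a₁ := (⟨s⟩, x)) (a₂ := (⟨s⟩, y)) rfl
      exact congrArg Prod.snd this⟩
    haveI : Unique X := uniqueOfSubsingleton (Classical.arbitrary X)
    exact ⟨Equiv.equivPUnit X⟩
  tfae_have 3 → 1 := by
    intro h
    constructor
    · rintro ⟨⟨s⟩, x⟩ ⟨⟨s'⟩, y⟩ _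
      obtain ⟨e⟩ := h s
      haveI := e.subsingleton
      exact Prod.ext rfl (Subsingleton.elim x y)
    · rintro ⟨s⟩
      obtain ⟨e⟩ := h s
      exact ⟨(⟨s⟩, e.symm PUnit.unit), rfl⟩
  tfae_have 3 → 2 := by
    intro h
    haveI : Nonempty (S → X) := ⟨fun s => (h s).some.symm PUnit.unit⟩
    haveI : Subsingleton (S → X) := ⟨fun f g => by
      funext s
      obtain ⟨e⟩ := h s
      haveI := e.subsingleton
      exact Subsingleton.elim _ _⟩
    haveI : Unique (S → X) := uniqueOfSubsingleton (Classical.arbitrary _)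
    exact ⟨Equiv.equivPUnit _⟩
  tfae_have 2 → 3 := by
    rintro ⟨e⟩ s
    have e2 : X ≃ (S → X) :=
      { toFun := fun x _ => x
        invFun := fun f => f s
        left_inv := fun x => rfl
        right_inv := fun f => funext fun s' => rfl }
    exact ⟨(e2.trans e).trans Equiv.punitEquivPUnit⟩
  tfae_have 3 → 4 := by
    intro h
    constructor
    · intro x y hxy
      have key : ∀ a b : PLift S ⊕ X, Relation.EqvGen (JoinRel S X) a b → a = b ∨ S := by
        intro a b hab
        induction hab with
        | rel a b hab => exact Or.inr hab.1
        | refl a => exact Or.inl rfl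
        | symm a b _ ih => exact ih.imp Eq.symm id
        | trans a b c _ _ ih1 ih2 =>
          rcases ih1 with h1 | h1
          · rcases ih2 with h2 | h2
            · exact Or.inl (h1.trans h2)
            · exact Or.inr h2
          · exact Or.inr h1
      rcases key _ _ (Quot.eqvGen_exact hxy) with h' | s
      · exact Sum.inr.inj h'
      · obtain ⟨e⟩ := h s
        haveI := e.subsingleton
        exact Subsingleton.elim x y
    · intro q
      induction q using Quot.ind with
      | mk a =>
        rcases a with ⟨⟨s⟩⟩ | x
        · obtain ⟨e⟩ := h s
          exact ⟨e.symm PUnit.unit, (Quot.sound ⟨s, _, rfl, rfl⟩).symm⟩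
        · exact ⟨x, rfl⟩
  tfae_have 4 → 3 := by
    rintro ⟨hinj, hsurj⟩ s
    obtain ⟨x, _⟩ := hsurj (Join.inl s)
    haveI : Subsingleton X := ⟨fun a b => by
      apply hinj
      have h1 : (Join.inr a : Join S X) = Join.inl s := (Quot.sound ⟨s, a, rfl, rfl⟩).symm
      have h2 : (Join.inr b : Join S X) = Join.inl s := (Quot.sound ⟨s, b, rfl, rfl⟩).symm
      exact h1.trans h2.symm⟩
    haveI : Unique X := uniqueOfSubsingleton x
    exact ⟨Equiv.equivPUnit X⟩
  tfae_finish
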